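/- Let M be a matching between bids B and asks A, where both M (by bid competitiveness of its transactions) and B are sorted in descending order of bid competitiveness, and let M_β = FOB(M, B) = f(M, B, 0). Then M_β is fair on bids: for all bids b₁, b₂ ∈ B with b₁ more competitive than b₂, if b₂ participates in M_β (i.e., Q(b₂, M_β) ≥ 1), then b₁ is fully traded in M_β (i.e., Q(b₁, M_β) = q(b₁)). -/

import Mathlib

structure Bid where
  id : ℕ
  timestamp : ℕ
  quantity : ℕ
  price : ℕ
deriving DecidableEq

structure Ask where
  id : ℕ
  timestamp : ℕ
  quantity : ℕ
  price : ℕ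
deriving DecidableEq

structure Transaction where
  bid : Bid
  ask : Ask
  quantity : ℕ
  price : ℕ
deriving DecidableEq

/-- Total traded quantity of a list of transactions. -/
def Qty (M : List Transaction) : ℕ := (M.map Transaction.quantity).sum

/-- Total traded quantity of bid `b` in `M`. -/
def QtyBid (b : Bid) (M : List Transaction) : ℕ :=
  ((M.filter (fun m => m.bid == b)).map Transaction.quantity).sum

/-- Total traded quantity of ask `a` in `M`. -/
def QtyAsk (a : Ask) (M : List Transaction) : ℕ :=
  ((M.filter (fun m => m.ask == a)).map Transaction.quantity).sum

/-- Total traded quantity between bid `b` and ask `a` in `M`. -/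
def QtyBidAsk (b : Bid) (a : Ask) (M : List Transaction) : ℕ :=
  ((M.filter (fun m => m.bid == b && m.ask == a)).map Transaction.quantity).sum

/-- Sum of quantities of a list of bids. -/
def QB (B : List Bid) : ℕ := (B.map Bid.quantity).sum

/-- Sum of quantities of a list of asks. -/
def QA (A : List Ask) : ℕ := (A.map Ask.quantity).sum

/-- `M` is a matching between bids `B` and asks `A`. -/
def Matching (B : List Bid) (A : List Ask) (M : List Transaction) : Prop :=
  (∀ m ∈ M, m.ask.price ≤ m.bid.price) ∧
  (∀ m ∈ M, m.bid ∈ B) ∧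
  (∀ m ∈ M, m.ask ∈ A) ∧
  (∀ b ∈ B, QtyBid b M ≤ b.quantity) ∧
  (∀ a ∈ A, QtyAsk a M ≤ a.quantity)

/-- Individual rationality. -/
def IsIR (M : List Transaction) : Prop :=
  ∀ m ∈ M, m.ask.price ≤ m.price ∧ m.price ≤ m.bid.price

/-- Uniformity: all trade prices equal. -/
def IsUniform (M : List Transaction) : Prop :=
  ∀ m1 ∈ M, ∀ m2 ∈ M, m1.price = m2.price

/-- `b1` is more competitive than `b2`. -/
def MoreCompetitiveBid (b1 b2 : Bid) : Prop :=
  b2.price < b1.price ∨ (b1.price = b2.price ∧ b1.timestamp < b2.timestamp)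

/-- `a1` is more competitive than `a2`. -/
def MoreCompetitiveAsk (a1 a2 : Ask) : Prop :=
  a1.price < a2.price ∨ (a1.price = a2.price ∧ a1.timestamp < a2.timestamp)

def FairOnBids (B : List Bid) (M : List Transaction) : Prop :=
  ∀ b1 ∈ B, ∀ b2 ∈ B, MoreCompetitiveBid b1 b2 → 1 ≤ QtyBid b2 M →
    QtyBid b1 M = b1.quantity

def FairOnAsks (A : List Ask) (M : List Transaction) : Prop :=
  ∀ a1 ∈ A, ∀ a2 ∈ A, MoreCompetitiveAsk a1 a2 → 1 ≤ QtyAsk a2 M →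
    QtyAsk a1 M = a1.quantity

def IsFair (B : List Bid) (A : List Ask) (M : List Transaction) : Prop :=
  FairOnBids B M ∧ FairOnAsks A M

/-- "at least as competitive as" order on bids (for sorting, most competitive first). -/
def BidGE (b1 b2 : Bid) : Prop := ¬ MoreCompetitiveBid b2 b1

/-- "at least as competitive as" order on asks (for sorting, most competitive first). -/
def AskGE (a1 a2 : Ask) : Prop := ¬ MoreCompetitiveAsk a2 a1

/-- The fair-on-bids recursion `f(M, B, t)`. -/
def fob : List Transaction → List Bid → ℕ → List Transaction
  | [], _, _ => []
  | _ :: _, [], _ => []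
  | m :: M', b :: B', t =>
    if m.quantity = b.quantity - t then
      ⟨b, m.ask, m.quantity, m.price⟩ :: fob M' B' 0
    else if m.quantity < b.quantity - t then
      ⟨b, m.ask, m.quantity, m.price⟩ :: fob M' (b :: B') (t + m.quantity)
    else
      ⟨b, m.ask, b.quantity - t, m.price⟩ ::
        fob (⟨m.bid, m.ask, m.quantity - (b.quantity - t), m.price⟩ :: M') B' 0
termination_by M B _ => M.length + B.length
decreasing_by all_goals (simp; try omega)

/-!
Processing a bid `b` at the head of `B`, the recursion emits a block of transactions all
assigned to `b` and then restarts on the rest of `B` with offset `0`; that restart can only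
produce a trade if the transactions did not run out, in which case the block has filled `b`
completely. Since `B` is sorted, every bid more competitive than a trading bid `b₂` heads `B`
at an earlier restart, hence is fully traded.
-/

lemma QtyBid_append (b : Bid) (L₁ L₂ : List Transaction) :
    QtyBid b (L₁ ++ L₂) = QtyBid b L₁ + QtyBid b L₂ := by
  simp [QtyBid, List.filter_append]

lemma QtyBid_eq_zero_of_forall_ne {b : Bid} {L : List Transaction}
    (h : ∀ x ∈ L, x.bid ≠ b) : QtyBid b L = 0 := by
  rw [QtyBid, List.filter_eq_nil_iff.2 (by simpa using h)]
  rfl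

lemma QtyBid_eq_Qty_of_forall_eq {b : Bid} {L : List Transaction}
    (h : ∀ x ∈ L, x.bid = b) : QtyBid b L = Qty L := by
  rw [QtyBid, List.filter_eq_self.2 (by simpa using h), Qty]

lemma fob_nil_right (M : List Transaction) (t : ℕ) : fob M [] t = [] := by
  cases M <;> simp [fob]

lemma exists_fob_cons_eq_append (M : List Transaction) (b : Bid) (B : List Bid) (t : ℕ) :
    ∃ P M', fob M (b :: B) t = P ++ fob M' B 0 ∧ (∀ x ∈ P, x.bid = b) ∧
      (M' = [] ∨ Qty P = b.quantity - t) := by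
  induction M generalizing t with
  | nil => exact ⟨[], [], by simp [fob], by simp, Or.inl rfl⟩
  | cons m M ih =>
    rw [fob]
    split_ifs with hfill hless
    · exact ⟨[⟨b, m.ask, m.quantity, m.price⟩], M, rfl, by simp,
        Or.inr (by simp [Qty, hfill])⟩
    · obtain ⟨P, M', hfob, hbid, hrest⟩ := ih (t + m.quantity)
      refine ⟨⟨b, m.ask, m.quantity, m.price⟩ :: P, M', by rw [hfob]; rfl, ?_, ?_⟩
      · simpa using hbid
      · refine hrest.imp_right fun hQ => ?_
        simp only [Qty, List.map_cons, List.sum_cons] at hQ ⊢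
        omega
    · exact ⟨[⟨b, m.ask, b.quantity - t, m.price⟩],
        ⟨m.bid, m.ask, m.quantity - (b.quantity - t), m.price⟩ :: M, rfl, by simp,
        Or.inr (by simp [Qty])⟩

lemma bid_mem_of_mem_fob {M : List Transaction} {B : List Bid} {t : ℕ} {x : Transaction}
    (hx : x ∈ fob M B t) : x.bid ∈ B := by
  induction B generalizing M t with
  | nil => simp [fob_nil_right] at hx
  | cons c B ih =>
    obtain ⟨P, M', hfob, hbid, -⟩ := exists_fob_cons_eq_append M c B t
    rw [hfob, List.mem_append] at hx
    rcases hx with hx | hx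
    · simp [hbid x hx]
    · exact List.mem_cons_of_mem c (ih hx)

lemma QtyBid_fob_of_not_mem {b : Bid} {B : List Bid} (hb : b ∉ B) (M : List Transaction)
    (t : ℕ) : QtyBid b (fob M B t) = 0 :=
  QtyBid_eq_zero_of_forall_ne fun _ hx h => hb (h ▸ bid_mem_of_mem_fob hx)

lemma MoreCompetitiveBid.ne {b₁ b₂ : Bid} (h : MoreCompetitiveBid b₁ b₂) : b₁ ≠ b₂ := by
  rintro rfl
  rcases h with h | ⟨-, h⟩ <;> omega

theorem fairOnBids_fob (M : List Transaction) {B : List Bid} (hnd : B.Nodup)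
    (hsort : List.Pairwise BidGE B) : FairOnBids B (fob M B 0) := by
  induction B generalizing M with
  | nil => simp [FairOnBids]
  | cons c B ih =>
    obtain ⟨hcB, hndB⟩ := List.nodup_cons.1 hnd
    obtain ⟨hc_ge, hsortB⟩ := List.pairwise_cons.1 hsort
    obtain ⟨P, M', hfob, hbid, hrest⟩ := exists_fob_cons_eq_append M c B 0
    have hQtyBid_ne (b : Bid) (hb : b ≠ c) :
        QtyBid b (fob M (c :: B) 0) = QtyBid b (fob M' B 0) := by
      rw [hfob, QtyBid_append,
        QtyBid_eq_zero_of_forall_ne fun x hx => (hbid x hx).symm ▸ hb.symm, zero_add]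
    intro b₁ hb₁ b₂ hb₂ hmc htrade
    have hb₂c : b₂ ≠ c := by
      rintro rfl
      exact hc_ge b₁ ((List.mem_cons.1 hb₁).resolve_left hmc.ne) hmc
    rw [hQtyBid_ne b₂ hb₂c] at htrade
    by_cases hb₁c : b₁ = c
    · subst hb₁c
      have hM' : M' ≠ [] := by
        rintro rfl
        simp [fob, QtyBid] at htrade
      rw [hfob, QtyBid_append, QtyBid_eq_Qty_of_forall_eq hbid, QtyBid_fob_of_not_mem hcB,
        hrest.resolve_left hM']
      rfl
    · rw [hQtyBid_ne b₁ hb₁c]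
      exact ih M' hndB hsortB b₁ ((List.mem_cons.1 hb₁).resolve_left hb₁c) b₂
        ((List.mem_cons.1 hb₂).resolve_left hb₂c) hmc htrade

theorem statement_10_general (B : List Bid) (M : List Transaction)
    (hB : (B.map Bid.id).Nodup)
    (hsortB : List.Pairwise BidGE B) :
    FairOnBids B (fob M B 0) :=
  fairOnBids_fob M hB.of_map hsortB

theorem statement_10 (B : List Bid) (A : List Ask) (M : List Transaction)
    (hB : (B.map Bid.id).Nodup) (hA : (A.map Ask.id).Nodup)
    (hM : Matching B A M)
    (hsortM : List.Pairwise (fun m1 m2 => BidGE m1.bid m2.bid) M)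
    (hsortB : List.Pairwise BidGE B) :
    FairOnBids B (fob M B 0) :=
  statement_10_general B M hB hsortB
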